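/- Let G be a finite weighted complete graph with weights in [0,1] and G_ε its ε-thresholded version. Every 0-dimensional persistence point of G with death time d ≤ ε is also a persistence point of G_ε with the same death time, and every finite persistence point of G with death time d ∈ (ε, 1] corresponds to a persistence point of G_ε with death time exactly 1. -/

import Mathlib

open scoped Classical
noncomputable section

variable {V : Type*} [Fintype V]

/-- Vietoris–Rips 1-skeleton of a weighted complete graph at scale `α`. -/
def vrGraph (w : V → V → ℝ) (α : ℝ) : SimpleGraph V where
  Adj i j := i ≠ j ∧ max (w i j) (w j i) ≤ α
  symm := by
    constructor
    intro i j h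
    exact ⟨h.1.symm, by rw [max_comm]; exact h.2⟩
  loopless := ⟨fun i h => h.1 rfl⟩

/-- Number of connected components of the Rips 1-skeleton at scale `α`. -/
def compCount (w : V → V → ℝ) (α : ℝ) : ℕ :=
  Nat.card (vrGraph w α).ConnectedComponent

/-- Left limit of the component counting function at `d`. -/
def compCountLeft (w : V → V → ℝ) (d : ℝ) : ℕ :=
  sInf (compCount w '' Set.Iio d)

/-- Multiplicity of `d` as a finite death time in the `H₀` persistence diagram. -/
def deathMult (w : V → V → ℝ) (d : ℝ) : ℕ :=
  compCountLeft w d - compCount w d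

/-- The finitely many candidate filtration values (the edge weights). -/
def weightVals (w : V → V → ℝ) : Finset ℝ :=
  Finset.image (fun p : V × V => max (w p.1 p.2) (w p.2 p.1)) Finset.univ

/-- The multiset of finite death times of the 0-dimensional persistence diagram
of the Vietoris–Rips filtration of the weighted complete graph `w`. -/
def finiteDeaths (w : V → V → ℝ) : Multiset ℝ :=
  (weightVals w).val.bind fun d => Multiset.replicate (deathMult w d) d

/-- The 0-dimensional persistence diagram (finite points; all births are `0`). -/
def D0 (w : V → V → ℝ) : Multiset (ℝ × ℝ) :=
  (finiteDeaths w).map fun d => (0, d)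

/-- Threshold modification: weights above `ε` are raised to `1`. -/
def thresh (w : V → V → ℝ) (ε : ℝ) : V → V → ℝ :=
  fun i j => if w i j ≤ ε then w i j else 1

/-- The number of finite 0-dimensional persistence points with death time `> ε`. -/
def mEps (w : V → V → ℝ) (ε : ℝ) : ℕ :=
  ((finiteDeaths w).filter (fun d => ε < d)).card

/-! Below `ε` thresholding changes no Rips graph, so component counts, and hence death
multiplicities, agree there. Above `ε` every thresholded weight is `1`, so every later death of
`G_ε` happens at `1`. The number of deaths after `a` telescopes to the component count at `a`
minus the one at `1`, and the two filtrations agree both at `ε` and at `1`. -/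

section VietorisRips

variable {w w' : V → V → ℝ} {α β d : ℝ}

omit [Fintype V] in
theorem vrGraph_mono (w : V → V → ℝ) (h : α ≤ β) : vrGraph w α ≤ vrGraph w β :=
  fun _ _ hij => ⟨hij.1, hij.2.trans h⟩

theorem compCount_antitone (w : V → V → ℝ) : Antitone (compCount w) := fun _ _ h =>
  SimpleGraph.ConnectedComponent.card_le_card_of_le (vrGraph_mono w h)

omit [Fintype V] in
theorem vrGraph_congr (h : ∀ i j, w i j ≤ α ↔ w' i j ≤ α) : vrGraph w α = vrGraph w' α := by
  ext i j
  exact and_congr_right fun _ => by rw [max_le_iff, max_le_iff, h i j, h j i]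

theorem mem_weightVals : d ∈ weightVals w ↔ ∃ i j, max (w i j) (w j i) = d := by
  simp [weightVals, Prod.exists]

theorem mem_weightVals_of_mem_finiteDeaths (hd : d ∈ finiteDeaths w) : d ∈ weightVals w := by
  obtain ⟨e, he, hde⟩ := Multiset.mem_bind.1 hd
  rwa [Multiset.eq_of_mem_replicate hde]

theorem compCount_eq_of_forall_weightVals (h : ∀ v ∈ weightVals w, v ≤ α ↔ v ≤ β) :
    compCount w α = compCount w β := by
  have hG : vrGraph w α = vrGraph w β := by
    ext i j
    exact and_congr_right fun _ => h _ (mem_weightVals.2 ⟨i, j, rfl⟩)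
  rw [compCount, compCount, hG]

theorem compCountLeft_eq_of_forall_weightVals_notMem_Ioo (hαd : α < d)
    (hgap : ∀ v ∈ weightVals w, v ∉ Set.Ioo α d) : compCountLeft w d = compCount w α := by
  have hmem : compCount w α ∈ compCount w '' Set.Iio d := ⟨α, hαd, rfl⟩
  refine le_antisymm (Nat.sInf_le hmem) (le_csInf ⟨_, hmem⟩ ?_)
  rintro _ ⟨β, hβd, rfl⟩
  rcases le_or_gt α β with hαβ | hβα
  · refine (compCount_eq_of_forall_weightVals (w := w) fun v hv => ⟨(·.trans hαβ), ?_⟩).le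
    exact fun hvβ => not_lt.1 fun hαv => hgap v hv ⟨hαv, hvβ.trans_lt hβd⟩
  · exact compCount_antitone w hβα.le

theorem exists_forall_weightVals_notMem_Ioo (w : V → V → ℝ) (d : ℝ) :
    ∃ α < d, ∀ v ∈ weightVals w, v ∉ Set.Ioo α d := by
  set S := insert (d - 1) ((weightVals w).filter (· < d))
  have hS : S.Nonempty := Finset.insert_nonempty _ _
  refine ⟨S.max' hS, (Finset.max'_lt_iff S hS).2 fun v hv => ?_, fun v hv hvI => ?_⟩
  · rcases Finset.mem_insert.1 hv with rfl | hv
    · linarith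
    · exact (Finset.mem_filter.1 hv).2
  · have hvS : v ∈ S := Finset.mem_insert_of_mem (Finset.mem_filter.2 ⟨hv, hvI.2⟩)
    exact (S.le_max' v hvS).not_gt hvI.1

theorem deathMult_eq_zero_of_notMem (hd : d ∉ weightVals w) : deathMult w d = 0 := by
  obtain ⟨α, hαd, hgap⟩ := exists_forall_weightVals_notMem_Ioo w d
  have hcount : compCount w d = compCount w α := by
    refine compCount_eq_of_forall_weightVals fun v hv => ⟨fun hvd => ?_, (·.trans hαd.le)⟩
    have hvd' : v < d := hvd.lt_of_ne fun h => hd (h ▸ hv)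
    exact not_lt.1 fun hαv => hgap v hv ⟨hαv, hvd'⟩
  rw [deathMult, compCountLeft_eq_of_forall_weightVals_notMem_Ioo hαd hgap, hcount, Nat.sub_self]

theorem count_finiteDeaths (w : V → V → ℝ) (d : ℝ) :
    (finiteDeaths w).count d = deathMult w d := by
  rw [finiteDeaths, Multiset.count_bind]
  simp_rw [Multiset.count_replicate]
  refine (Finset.sum_ite_eq' (weightVals w) d (deathMult w)).trans ?_
  split_ifs with hd
  · rfl
  · exact (deathMult_eq_zero_of_notMem hd).symm

omit [Fintype V] in
theorem deathMult_congr (h : ∀ α ≤ d, compCount w α = compCount w' α) :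
    deathMult w d = deathMult w' d := by
  rw [deathMult, deathMult, compCountLeft, compCountLeft, h d le_rfl,
    Set.image_congr fun β hβ => h β (Set.mem_Iio.1 hβ).le]

theorem card_filter_finiteDeaths (w : V → V → ℝ) (p : ℝ → Prop) [DecidablePred p] :
    ((finiteDeaths w).filter p).card = ∑ e ∈ (weightVals w).filter p, deathMult w e := by
  rw [finiteDeaths, Multiset.filter_bind, Multiset.card_bind, Finset.sum_filter]
  refine congrArg Multiset.sum (Multiset.map_congr rfl fun e _ => ?_)
  have hrep : ∀ x ∈ Multiset.replicate (deathMult w e) e, x = e :=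
    fun _ hx => Multiset.eq_of_mem_replicate hx
  by_cases h : p e
  · simp [h, Multiset.filter_eq_self.2 fun x hx => hrep x hx ▸ h]
  · simp [h, Multiset.filter_eq_nil.2 fun x hx => hrep x hx ▸ h]

theorem sum_deathMult_filter_lt {b : ℝ} (hb : ∀ i j, w i j ≤ b) (a : ℝ) :
    ∑ e ∈ (weightVals w).filter (a < ·), deathMult w e = compCount w a - compCount w b := by
  have hWb : ∀ v ∈ weightVals w, v ≤ b := by
    intro v hv
    obtain ⟨i, j, rfl⟩ := mem_weightVals.1 hv
    exact max_le (hb i j) (hb j i)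
  -- Peel off the smallest weight `m > a`: the count is constant on `[a, m)`, so
  -- `deathMult w m = compCount w a - compCount w m`.
  induction hs : (weightVals w).filter (a < ·) using Finset.induction_on_min generalizing a with
  | empty =>
    have hab : compCount w a = compCount w b := by
      refine compCount_eq_of_forall_weightVals fun v hv => iff_of_true ?_ (hWb v hv)
      exact not_lt.1 (Finset.filter_eq_empty_iff.1 hs hv)
    rw [Finset.sum_empty, hab, Nat.sub_self]
  | insert m s hms ih =>
    have hmem : ∀ v, v ∈ weightVals w ∧ a < v ↔ v = m ∨ v ∈ s := fun v => by
      rw [← Finset.mem_filter, hs, Finset.mem_insert]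
    have hm : m ∈ weightVals w ∧ a < m := (hmem m).2 (Or.inl rfl)
    have hs' : (weightVals w).filter (m < ·) = s := by
      ext v
      rw [Finset.mem_filter]
      refine ⟨fun ⟨hv, hmv⟩ => ((hmem v).1 ⟨hv, hm.2.trans hmv⟩).resolve_left hmv.ne',
        fun hvs => ⟨((hmem v).2 (Or.inr hvs)).1, hms v hvs⟩⟩
    have hgap : ∀ v ∈ weightVals w, v ∉ Set.Ioo a m := by
      rintro v hv ⟨hav, hvm⟩
      rcases (hmem v).1 ⟨hv, hav⟩ with rfl | hvs
      · exact hvm.false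
      · exact (hms v hvs).not_gt hvm
    rw [Finset.sum_insert fun h => (hms m h).false, ih m hs', deathMult,
      compCountLeft_eq_of_forall_weightVals_notMem_Ioo hm.2 hgap]
    have := compCount_antitone w hm.2.le
    have := compCount_antitone w (hWb m hm.1)
    omega

theorem card_filter_lt_finiteDeaths {b : ℝ} (hb : ∀ i j, w i j ≤ b) (a : ℝ) :
    ((finiteDeaths w).filter (a < ·)).card = compCount w a - compCount w b := by
  rw [card_filter_finiteDeaths, sum_deathMult_filter_lt hb]

end VietorisRips

section Threshold

variable {w : V → V → ℝ} {ε α d : ℝ}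

omit [Fintype V] in
theorem thresh_le_or_eq_one (w : V → V → ℝ) (ε : ℝ) (i j : V) :
    thresh w ε i j ≤ ε ∨ thresh w ε i j = 1 := by
  unfold thresh
  split_ifs with h
  exacts [Or.inl h, Or.inr rfl]

omit [Fintype V] in
theorem thresh_le_one (hw1 : ∀ i j, w i j ≤ 1) (i j : V) : thresh w ε i j ≤ 1 := by
  unfold thresh
  split_ifs
  exacts [hw1 i j, le_rfl]

omit [Fintype V] in
theorem thresh_le_iff {i j : V} (hw1 : w i j ≤ 1) (hα : α ≤ ε) :
    thresh w ε i j ≤ α ↔ w i j ≤ α := by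
  unfold thresh
  split_ifs with h
  · rfl
  · exact iff_of_false (by linarith) (by linarith)

omit [Fintype V] in
theorem compCount_thresh_of_le (hw1 : ∀ i j, w i j ≤ 1) (hα : α ≤ ε) :
    compCount (thresh w ε) α = compCount w α := by
  rw [compCount, compCount, vrGraph_congr fun i j => thresh_le_iff (hw1 i j) hα]

omit [Fintype V] in
theorem compCount_thresh_of_one_le (hw1 : ∀ i j, w i j ≤ 1) (hα : 1 ≤ α) :
    compCount (thresh w ε) α = compCount w α := by
  rw [compCount, compCount, vrGraph_congr fun i j =>
    iff_of_true ((thresh_le_one hw1 i j).trans hα) ((hw1 i j).trans hα)]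

theorem eq_one_of_mem_weightVals_thresh (hε1 : ε ≤ 1) (hd : d ∈ weightVals (thresh w ε))
    (hεd : ε < d) : d = 1 := by
  obtain ⟨i, j, rfl⟩ := mem_weightVals.1 hd
  rcases thresh_le_or_eq_one w ε i j with hij | hij <;>
    rcases thresh_le_or_eq_one w ε j i with hji | hji
  · exact absurd (max_le hij hji) hεd.not_ge
  · rw [hji]
    exact max_eq_right (hij.trans hε1)
  · rw [hij]
    exact max_eq_left (hji.trans hε1)
  · rw [hij, hji, max_self]

end Threshold

theorem deaths_of_thresholded_general
    {N : ℕ} (w : Fin N → Fin N → ℝ)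
    (hw1 : ∀ i j, w i j ≤ 1)
    (ε : ℝ) (hε1 : ε ≤ 1) :
    (∀ d : ℝ, d ≤ ε →
      (finiteDeaths (thresh w ε)).count d = (finiteDeaths w).count d) ∧
    (∀ d ∈ finiteDeaths (thresh w ε), ε < d → d = 1) ∧
    ((finiteDeaths (thresh w ε)).filter (fun d => ε < d)).card
      = ((finiteDeaths w).filter (fun d => ε < d)).card := by
  refine ⟨fun d hd => ?_, fun d hd hεd => ?_, ?_⟩
  · rw [count_finiteDeaths, count_finiteDeaths]
    exact deathMult_congr fun α hα => compCount_thresh_of_le hw1 (hα.trans hd)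
  · exact eq_one_of_mem_weightVals_thresh hε1 (mem_weightVals_of_mem_finiteDeaths hd) hεd
  · rw [card_filter_lt_finiteDeaths (thresh_le_one hw1), card_filter_lt_finiteDeaths hw1,
      compCount_thresh_of_le hw1 le_rfl, compCount_thresh_of_one_le hw1 le_rfl]

/-- Every 0-dimensional persistence point of `G` with death
`d ≤ ε` is also a persistence point of `G_ε` with the same death (with the same
multiplicity), and the finite persistence points of `G` with death in `(ε, 1]`
correspond to persistence points of `G_ε` with death exactly `1`. -/
theorem deaths_of_thresholded
    {N : ℕ} (w : Fin N → Fin N → ℝ)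
    (hw0 : ∀ i j, 0 ≤ w i j) (hw1 : ∀ i j, w i j ≤ 1)
    (hsymm : ∀ i j, w i j = w j i)
    (ε : ℝ) (hε0 : 0 ≤ ε) (hε1 : ε ≤ 1) :
    (∀ d : ℝ, d ≤ ε →
      (finiteDeaths (thresh w ε)).count d = (finiteDeaths w).count d) ∧
    (∀ d ∈ finiteDeaths (thresh w ε), ε < d → d = 1) ∧
    ((finiteDeaths (thresh w ε)).filter (fun d => ε < d)).card
      = ((finiteDeaths w).filter (fun d => ε < d)).card :=
  deaths_of_thresholded_general w hw1 ε hε1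

end
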